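/- arXiv:2407.07084 — 2 statements merged into one kernel-verified Lean document; each statement's English description precedes it below -/
import Mathlib

section
/- Assume each f_i is μ-convex with μ ≥ 8δ, the family {f_i} has δ-SOD with δ > 0, and set λ = 2δ. Suppose the Acc-S-DANE iterates (with full participation) satisfy, for every round r ≥ 0, the accuracy condition Σ_{i=1}^n ‖∇F_{i,r}(x_{i,r+1})‖² ≤ δ² Σ_{i=1}^n ‖x_{i,r+1} − y^r‖². Let x* be a minimizer of f and D := ‖x⁰ − x*‖. Then for every R ≥ 1: f(x^R) − f(x*) ≤ 4δD² / (1 + √(μ/(8δ)))^{2R−2}. -/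
/-!
The potential `A r * (f (x r) - f x⋆) + B r / 2 * ‖x⋆ - v r‖ ^ 2` is nonincreasing in `r`.
Convexity of the `f i` and δ-SOD bound `f (x (r+1))`, for every `z`, by the mean of the
linearisations `f i (x_i) + ⟪∇f i (x_i), z - x_i⟫` plus `δ * ‖z - y r‖ ^ 2`; with `λ = 2δ` the
accuracy condition absorbs the error of the inexact local solves. For
`z = (A r • x r + a • v (r+1)) / A (r+1)` the quadratic term is `B r / 2 * ‖v (r+1) - v r‖ ^ 2` by
the choice of `a`. Since `v (r+1)` minimises the `B (r+1)`-strongly convex quadratic `G r`,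
`G r (v (r+1)) + B (r+1) / 2 * ‖x⋆ - v (r+1)‖ ^ 2 = G r x⋆`, and μ-convexity bounds `G r x⋆`
by `a f x⋆ + B r / 2 * ‖x⋆ - v r‖ ^ 2` minus the mean of `a (f i (x_i) - ⟪∇f i (x_i), x_i⟫)`.
Finally `λ a ^ 2 ≥ μ A r A (r+1)` gives `√A (r+1) ≥ (1 + √(μ / 4λ)) √A r`, so `A R` grows
geometrically from `A 1 = 1 / λ`.
-/

open Finset RealInnerProductSpace

section Hilbert

variable {E : Type*} [NormedAddCommGroup E] [InnerProductSpace ℝ E]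

theorem two_mul_inner_le_norm_sq_div_add (u w : E) {d : ℝ} (hd : 0 < d) :
    2 * ⟪u, w⟫ ≤ ‖u‖ ^ 2 / d + d * ‖w‖ ^ 2 := by
  have h := norm_sub_sq_real u (d • w)
  rw [norm_smul, real_inner_smul_right, Real.norm_of_nonneg hd.le] at h
  rw [div_add' _ _ _ hd.ne', le_div_iff₀ hd]
  nlinarith [sq_nonneg ‖u - d • w‖]

theorem inner_add_norm_sub_sq_eq_of_smul_eq {c p q m : E} {α β : ℝ}
    (hm : (α + β) • m = α • p + β • q - c) (w : E) :
    ⟪c, w⟫ + α / 2 * ‖w - p‖ ^ 2 + β / 2 * ‖w - q‖ ^ 2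
      = ⟪c, m⟫ + α / 2 * ‖m - p‖ ^ 2 + β / 2 * ‖m - q‖ ^ 2 + (α + β) / 2 * ‖w - m‖ ^ 2 := by
  have hgrad : c + α • (m - p) + β • (m - q) = 0 := by
    linear_combination (norm := module) hm
  have hcross : ⟪c, w - m⟫ + α * ⟪m - p, w - m⟫ + β * ⟪m - q, w - m⟫ = 0 := by
    rw [← real_inner_smul_left, ← real_inner_smul_left, ← inner_add_left, ← inner_add_left,
      hgrad, inner_zero_left]
  have hp := norm_add_sq_real (w - m) (m - p)
  have hq := norm_add_sq_real (w - m) (m - q)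
  rw [sub_add_sub_cancel, real_inner_comm] at hp hq
  rw [hp, hq, ← sub_add_cancel w m, inner_add_right, add_sub_cancel_right]
  linear_combination hcross

variable {ι : Type*} [Fintype ι]

theorem sum_sub_eq_zero_of_card_smul_eq {u : ι → E} {m : E}
    (hm : (Fintype.card ι : ℝ) • m = ∑ i, u i) : ∑ i, (u i - m) = 0 := by
  rw [sum_sub_distrib, ← hm, sum_const, card_univ, Nat.cast_smul_eq_nsmul, sub_self]

theorem sum_norm_sub_sq_eq_of_card_smul_eq {u : ι → E} {m : E}
    (hm : (Fintype.card ι : ℝ) • m = ∑ i, u i) (w : E) :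
    ∑ i, ‖u i - w‖ ^ 2 = ∑ i, ‖u i - m‖ ^ 2 + Fintype.card ι * ‖m - w‖ ^ 2 := by
  have hcross : ∑ i, ⟪u i - m, m - w⟫ = 0 := by
    rw [← sum_inner, sum_sub_eq_zero_of_card_smul_eq hm, inner_zero_left]
  calc ∑ i, ‖u i - w‖ ^ 2 = ∑ i, (‖u i - m‖ ^ 2 + 2 * ⟪u i - m, m - w⟫ + ‖m - w‖ ^ 2) := by
        refine sum_congr rfl fun i _ => ?_
        rw [← norm_add_sq_real, sub_add_sub_cancel]
    _ = _ := by
        rw [sum_add_distrib, sum_add_distrib, ← mul_sum, hcross, sum_const, card_univ,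
          nsmul_eq_mul]
        ring

theorem sum_inner_le_of_accuracy {g c xs : ι → E} {y : E} {δ lam : ℝ} (hlam : 0 < lam)
    (hc : ∑ i, c i = 0)
    (hacc : ∑ i, ‖g i + c i + lam • (xs i - y)‖ ^ 2 ≤ δ ^ 2 * ∑ i, ‖xs i - y‖ ^ 2) (z : E) :
    ∑ i, ⟪c i, xs i⟫ + (lam / 2 - δ ^ 2 / (2 * lam)) * ∑ i, ‖xs i - y‖ ^ 2
      ≤ ∑ i, ⟪g i, z - xs i⟫ + Fintype.card ι * (lam / 2 * ‖z - y‖ ^ 2) := by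
  have hstep : ∀ i, ⟪c i, xs i⟫ - ⟪c i, z⟫ + lam / 2 * ‖xs i - y‖ ^ 2
      - ‖g i + c i + lam • (xs i - y)‖ ^ 2 / (2 * lam)
      ≤ ⟪g i, z - xs i⟫ + lam / 2 * ‖z - y‖ ^ 2 := by
    intro i
    have h1 := two_mul_inner_le_norm_sq_div_add (g i + c i + lam • (xs i - y)) (xs i - z) hlam
    have h2 := norm_add_sq_real (z - xs i) (xs i - y)
    rw [sub_add_sub_cancel] at h2
    rw [norm_sub_rev (xs i) z, ← neg_sub z (xs i), inner_neg_right, inner_add_left, inner_add_left,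
      real_inner_smul_left, inner_sub_right (c i)] at h1
    have h3 := real_inner_comm (xs i - y) (z - xs i)
    have h4 : ‖g i + c i + lam • (xs i - y)‖ ^ 2 / (2 * lam)
        = ‖g i + c i + lam • (xs i - y)‖ ^ 2 / lam / 2 := by ring
    rw [h2, h3, h4]
    linarith
  have hsum := sum_le_sum fun i (_ : i ∈ univ) => hstep i
  simp only [sum_add_distrib, sum_sub_distrib, ← sum_div, ← mul_sum, ← sum_inner, hc,
    inner_zero_left, sum_const, card_univ, nsmul_eq_mul] at hsum
  have hacc' := div_le_div_of_nonneg_right hacc (by positivity : (0 : ℝ) ≤ 2 * lam)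
  have : (δ ^ 2 * ∑ i, ‖xs i - y‖ ^ 2) / (2 * lam) = δ ^ 2 / (2 * lam) * ∑ i, ‖xs i - y‖ ^ 2 := by
    ring
  linarith

end Hilbert

section Gradient

variable {E : Type*} [NormedAddCommGroup E] [InnerProductSpace ℝ E] [CompleteSpace E] {x : E}

theorem gradient_fun_sub {f g : E → ℝ} (hf : DifferentiableAt ℝ f x)
    (hg : DifferentiableAt ℝ g x) :
    gradient (fun z => f z - g z) x = gradient f x - gradient g x := by
  simp only [gradient, fderiv_fun_sub hf hg, map_sub]

theorem gradient_const_mul_sum {ι : Type*} [Fintype ι] {f : ι → E → ℝ}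
    (hf : ∀ i, DifferentiableAt ℝ (f i) x) (c : ℝ) :
    gradient (fun z => c * ∑ i, f i z) x = c • ∑ i, gradient (f i) x := by
  simp only [gradient, fderiv_const_mul (DifferentiableAt.fun_sum fun i _ => hf i),
    fderiv_fun_sum fun i _ => hf i, map_smul, map_sum]

end Gradient

section LocalStep

variable {E : Type*} [NormedAddCommGroup E] [InnerProductSpace ℝ E] [CompleteSpace E]
  {ι : Type*} [Fintype ι]

theorem sum_le_sum_add_inner_of_sod {f : ι → E → ℝ} {G : E → E} {δ : ℝ} (hδ : 0 < δ)
    (hconv : ∀ i x y, f i x + ⟪gradient (f i) x, y - x⟫ ≤ f i y)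
    {xs : ι → E} {x y : E} (hx : (Fintype.card ι : ℝ) • x = ∑ i, xs i)
    (hc : ∑ i, (G y - gradient (f i) y) = 0)
    (hsod : ∑ i, ‖(G x - gradient (f i) x) - (G y - gradient (f i) y)‖ ^ 2
      ≤ Fintype.card ι * δ ^ 2 * ‖x - y‖ ^ 2) :
    ∑ i, f i x ≤ ∑ i, (f i (xs i) + ⟪G y - gradient (f i) y, xs i⟫)
      + δ / 2 * ∑ i, ‖xs i - y‖ ^ 2 := by
  set c := fun i => G y - gradient (f i) y
  set e := fun i => (G x - gradient (f i) x) - c i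
  have hstep : ∀ i, f i x ≤ f i (xs i) + ⟪c i, xs i⟫
      + (‖e i‖ ^ 2 / δ + δ * ‖xs i - x‖ ^ 2) / 2 - ⟪G x, xs i - x⟫ - ⟪c i, x⟫ := by
    intro i
    have hgrad : gradient (f i) x = G x - e i - c i := by simp only [e]; abel
    have h1 := hconv i x (xs i)
    have h2 := two_mul_inner_le_norm_sq_div_add (e i) (xs i - x) hδ
    rw [hgrad, inner_sub_left, inner_sub_left, inner_sub_right (c i)] at h1
    linarith
  have hvar := sum_norm_sub_sq_eq_of_card_smul_eq hx y
  have hsum := sum_le_sum fun i (_ : i ∈ univ) => hstep i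
  simp only [sum_add_distrib, sum_sub_distrib, ← sum_div, ← mul_sum, ← inner_sum, ← sum_inner,
    sum_sub_eq_zero_of_card_smul_eq hx, hc, inner_zero_left, inner_zero_right] at hsum
  have hsod' : (∑ i, ‖e i‖ ^ 2) / δ ≤ Fintype.card ι * δ * ‖x - y‖ ^ 2 := by
    rw [div_le_iff₀ hδ]; linarith
  show ∑ i, f i x ≤ ∑ i, (f i (xs i) + ⟪c i, xs i⟫) + δ / 2 * ∑ i, ‖xs i - y‖ ^ 2
  rw [sum_add_distrib, hvar]
  linarith

theorem sum_le_sum_add_inner_of_accuracy {f : ι → E → ℝ} {G : E → E} {δ : ℝ} (hδ : 0 < δ)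
    (hconv : ∀ i x y, f i x + ⟪gradient (f i) x, y - x⟫ ≤ f i y)
    (hG : ∀ w, (Fintype.card ι : ℝ) • G w = ∑ i, gradient (f i) w)
    {xs : ι → E} {x y : E} (hx : (Fintype.card ι : ℝ) • x = ∑ i, xs i)
    (hsod : ∑ i, ‖(G x - gradient (f i) x) - (G y - gradient (f i) y)‖ ^ 2
      ≤ Fintype.card ι * δ ^ 2 * ‖x - y‖ ^ 2)
    (hacc : ∑ i, ‖gradient (f i) (xs i) + (G y - gradient (f i) y) + (2 * δ) • (xs i - y)‖ ^ 2
      ≤ δ ^ 2 * ∑ i, ‖xs i - y‖ ^ 2) (z : E) :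
    ∑ i, f i x ≤ ∑ i, (f i (xs i) + ⟪gradient (f i) (xs i), z - xs i⟫)
      + Fintype.card ι * (δ * ‖z - y‖ ^ 2) := by
  have hc : ∑ i, (G y - gradient (f i) y) = 0 := by
    rw [← neg_eq_zero, ← sum_neg_distrib]
    simpa only [neg_sub] using sum_sub_eq_zero_of_card_smul_eq (hG y)
  have hdescent := sum_le_sum_add_inner_of_sod hδ hconv hx hc hsod
  have hlower := sum_inner_le_of_accuracy (by positivity : 0 < 2 * δ) hc hacc z
  have hcoef : 2 * δ / 2 - δ ^ 2 / (2 * (2 * δ)) = δ / 2 + δ / 4 := by field_simp; ring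
  rw [hcoef] at hlower
  rw [sum_add_distrib] at hdescent ⊢
  have : 0 ≤ δ * ∑ i, ‖xs i - y‖ ^ 2 := by positivity
  linarith

theorem sum_add_inner_add_norm_sq_le {f : ι → E → ℝ} {μ a B : ℝ} (hμ : 0 ≤ μ) (ha : 0 ≤ a)
    (hconv : ∀ i x y, f i y ≥ f i x + ⟪gradient (f i) x, y - x⟫ + μ / 2 * ‖x - y‖ ^ 2)
    {xs : ι → E} {X g V V' : E} (hX : (Fintype.card ι : ℝ) • X = ∑ i, xs i)
    (hg : (Fintype.card ι : ℝ) • g = ∑ i, gradient (f i) (xs i))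
    (hV' : (B + μ * a) • V' = B • V + (a * μ) • X - a • g) (w : E) :
    a * ∑ i, (f i (xs i) + ⟪gradient (f i) (xs i), V' - xs i⟫)
        + Fintype.card ι * (B / 2 * ‖V' - V‖ ^ 2)
        + Fintype.card ι * ((B + μ * a) / 2 * ‖w - V'‖ ^ 2)
      ≤ a * ∑ i, f i w + Fintype.card ι * (B / 2 * ‖w - V‖ ^ 2) := by
  have hconvw : ∑ i, (f i (xs i) + ⟪gradient (f i) (xs i), w - xs i⟫)
      + μ / 2 * ∑ i, ‖xs i - w‖ ^ 2 ≤ ∑ i, f i w := by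
    have h := sum_le_sum fun i (_ : i ∈ univ) => hconv i (xs i) w
    simpa only [sum_add_distrib, ← mul_sum] using h
  have hlin : ∑ i, ⟪gradient (f i) (xs i), w - xs i⟫
      = ∑ i, ⟪gradient (f i) (xs i), V' - xs i⟫ + Fintype.card ι * (⟪g, w⟫ - ⟪g, V'⟫) := by
    rw [← inner_sub_right, ← real_inner_smul_left, hg, sum_inner, ← sum_add_distrib]
    refine sum_congr rfl fun i _ => ?_
    rw [← inner_add_right, sub_add_sub_cancel']
  have hvar := sum_norm_sub_sq_eq_of_card_smul_eq hX w
  have hquad := inner_add_norm_sub_sq_eq_of_smul_eq (c := a • g) (p := X) (q := V)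
    (show (a * μ + B) • V' = (a * μ) • X + B • V - a • g by
      rw [show a * μ + B = B + μ * a by ring, hV']; abel) w
  rw [sum_add_distrib, hlin, hvar] at hconvw
  rw [real_inner_smul_left, real_inner_smul_left, norm_sub_rev w X] at hquad
  have h1 := mul_le_mul_of_nonneg_left hconvw ha
  have h2 : 0 ≤ a * (μ / 2 * ∑ i, ‖xs i - X‖ ^ 2) := by positivity
  have h3 : 0 ≤ Fintype.card ι * (a * μ / 2 * ‖V' - X‖ ^ 2) := by positivity
  rw [sum_add_distrib]
  linear_combination h1 - Fintype.card ι * hquad + h2 + h3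

theorem sum_potential_succ_le {f : ι → E → ℝ} {G : E → E} {μ δ : ℝ} (hμ : 0 ≤ μ) (hδ : 0 < δ)
    (hconv : ∀ i x y, f i y ≥ f i x + ⟪gradient (f i) x, y - x⟫ + μ / 2 * ‖x - y‖ ^ 2)
    (hG : ∀ w, (Fintype.card ι : ℝ) • G w = ∑ i, gradient (f i) w)
    {A₀ a B₀ : ℝ} (hA₀ : 0 ≤ A₀) (ha : 0 < a) (haB : 2 * δ * a ^ 2 = (A₀ + a) * B₀)
    {xs : ι → E} {X V y X' g V' : E} (hy : (A₀ + a) • y = A₀ • X + a • V)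
    (hX' : (Fintype.card ι : ℝ) • X' = ∑ i, xs i)
    (hg : (Fintype.card ι : ℝ) • g = ∑ i, gradient (f i) (xs i))
    (hV' : (B₀ + μ * a) • V' = B₀ • V + (a * μ) • X' - a • g)
    (hsod : ∑ i, ‖(G X' - gradient (f i) X') - (G y - gradient (f i) y)‖ ^ 2
      ≤ Fintype.card ι * δ ^ 2 * ‖X' - y‖ ^ 2)
    (hacc : ∑ i, ‖gradient (f i) (xs i) + (G y - gradient (f i) y) + (2 * δ) • (xs i - y)‖ ^ 2
      ≤ δ ^ 2 * ∑ i, ‖xs i - y‖ ^ 2) (w : E) :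
    (A₀ + a) * ∑ i, f i X' + Fintype.card ι * ((B₀ + μ * a) / 2 * ‖w - V'‖ ^ 2)
      ≤ A₀ * ∑ i, f i X + a * ∑ i, f i w + Fintype.card ι * (B₀ / 2 * ‖w - V‖ ^ 2) := by
  have hconv₀ : ∀ i x y, f i x + ⟪gradient (f i) x, y - x⟫ ≤ f i y := fun i x y => by
    have : 0 ≤ μ / 2 * ‖x - y‖ ^ 2 := by positivity
    linarith [hconv i x y]
  have hA₁ : 0 < A₀ + a := by linarith
  set z := (A₀ + a)⁻¹ • (A₀ • X + a • V')
  have hz : (A₀ + a) • z = A₀ • X + a • V' := smul_inv_smul₀ hA₁.ne' _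
  have hsplit : (A₀ + a) * ∑ i, (f i (xs i) + ⟪gradient (f i) (xs i), z - xs i⟫)
      = A₀ * ∑ i, (f i (xs i) + ⟪gradient (f i) (xs i), X - xs i⟫)
        + a * ∑ i, (f i (xs i) + ⟪gradient (f i) (xs i), V' - xs i⟫) := by
    simp only [mul_sum, ← sum_add_distrib]
    refine sum_congr rfl fun i _ => ?_
    have h : (A₀ + a) • (z - xs i) = A₀ • (X - xs i) + a • (V' - xs i) := by
      rw [smul_sub, hz]; module
    have := congrArg (⟪gradient (f i) (xs i), ·⟫) h
    simp only [inner_add_right, real_inner_smul_right] at this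
    linear_combination this
  have hdist : (A₀ + a) * (δ * ‖z - y‖ ^ 2) = B₀ / 2 * ‖V' - V‖ ^ 2 := by
    have h : (A₀ + a) • (z - y) = a • (V' - V) := by rw [smul_sub, smul_sub, hz, hy]; module
    have := congrArg (‖·‖ ^ 2) h
    simp only [norm_smul, mul_pow, Real.norm_of_nonneg hA₁.le, Real.norm_of_nonneg ha.le] at this
    refine mul_left_cancel₀ hA₁.ne' ?_
    linear_combination δ * this + ‖V' - V‖ ^ 2 / 2 * haB
  have hkey := mul_le_mul_of_nonneg_left
    (sum_le_sum_add_inner_of_accuracy hδ hconv₀ hG hX' hsod hacc z) hA₁.le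
  have hX := mul_le_mul_of_nonneg_left
    (sum_le_sum fun i (_ : i ∈ univ) => hconv₀ i (xs i) X) hA₀
  have hest := sum_add_inner_add_norm_sq_le hμ ha.le hconv hX' hg hV' w
  linear_combination hkey + hsplit + Fintype.card ι * hdist + hX + hest

end LocalStep

theorem acc_sdane_potential_succ_le {E : Type*} [NormedAddCommGroup E] [InnerProductSpace ℝ E]
    [CompleteSpace E] {n : ℕ} (hn : 0 < n) {f' : Fin n → E → ℝ}
    (hdiff : ∀ i, Differentiable ℝ (f' i)) {f : E → ℝ}
    (hfdef : f = fun x => (1 / (n : ℝ)) * ∑ i, f' i x) {μ : ℝ} (hμ : 0 ≤ μ)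
    (hconv : ∀ i, ∀ x y : E,
      f' i y ≥ f' i x + ⟪gradient (f' i) x, y - x⟫ + (μ / 2) * ‖x - y‖ ^ 2)
    {δ : ℝ} (hδ : 0 < δ)
    (hSOD : ∀ x y : E,
      (1 / (n : ℝ)) * ∑ i, ‖gradient (fun z => f z - f' i z) x
          - gradient (fun z => f z - f' i z) y‖ ^ 2 ≤ δ ^ 2 * ‖x - y‖ ^ 2)
    {A₀ A₁ B₀ B₁ a : ℝ} (hA₀ : 0 ≤ A₀) (ha : 0 < a) (haeq : 2 * δ * a ^ 2 = (A₀ + a) * B₀)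
    (hA₁ : A₁ = A₀ + a) (hB₁ : B₁ = B₀ + μ * a) {X V y X' V' : E} {xs : Fin n → E}
    (hy : y = A₁⁻¹ • (A₀ • X + a • V)) (hX' : X' = (1 / (n : ℝ)) • ∑ i, xs i)
    (hV' : V' = B₁⁻¹ • (B₀ • V + (a * μ) • X'
      - a • ((1 / (n : ℝ)) • ∑ i, gradient (f' i) (xs i))))
    (hacc : ∑ i, ‖gradient (f' i) (xs i) + gradient f y - gradient (f' i) y
      + (2 * δ) • (xs i - y)‖ ^ 2 ≤ δ ^ 2 * ∑ i, ‖xs i - y‖ ^ 2) (w : E) :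
    A₁ * (f X' - f w) + B₁ / 2 * ‖w - V'‖ ^ 2 ≤ A₀ * (f X - f w) + B₀ / 2 * ‖w - V‖ ^ 2 := by
  subst hA₁ hB₁
  have hN : (0 : ℝ) < n := by exact_mod_cast hn
  have hmean : ∀ u : Fin n → E,
      (Fintype.card (Fin n) : ℝ) • ((1 / (n : ℝ)) • ∑ i, u i) = ∑ i, u i := fun u => by
    rw [Fintype.card_fin, smul_smul, mul_one_div_cancel hN.ne', one_smul]
  have hf : ∀ w, (n : ℝ) * f w = ∑ i, f' i w := fun w => by
    rw [hfdef, ← mul_assoc, mul_one_div_cancel hN.ne', one_mul]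
  have hdf : Differentiable ℝ f := by
    rw [hfdef]; exact (Differentiable.fun_sum fun i _ => hdiff i).const_mul _
  have hG : ∀ w, (Fintype.card (Fin n) : ℝ) • gradient f w = ∑ i, gradient (f' i) w :=
    fun w => by rw [hfdef, gradient_const_mul_sum fun i => hdiff i w, hmean]
  have hsod := hSOD X' y
  simp only [gradient_fun_sub (hdf _) (hdiff _ _)] at hsod
  rw [one_div, inv_mul_le_iff₀ hN] at hsod
  have hB₀ : 0 < B₀ := pos_of_mul_pos_right (a := A₀ + a) (by rw [← haeq]; positivity) (by linarith)
  have hy' : (A₀ + a) • y = A₀ • X + a • V := by rw [hy, smul_inv_smul₀ (by positivity)]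
  have hV'' : (B₀ + μ * a) • V' = B₀ • V + (a * μ) • X'
      - a • ((1 / (n : ℝ)) • ∑ i, gradient (f' i) (xs i)) := by
    rw [hV', smul_inv_smul₀ (by positivity)]
  have hsum := sum_potential_succ_le hμ hδ hconv hG hA₀ ha haeq hy' (hX' ▸ hmean xs) (hmean _) hV''
    (by rw [Fintype.card_fin]; linarith) (by simpa only [add_sub_assoc] using hacc) w
  simp only [Fintype.card_fin, ← hf] at hsum
  refine le_of_mul_le_mul_left ?_ hN
  linear_combination hsum

theorem nonneg_of_succ_eq_add {A a : ℕ → ℝ} (hA0 : A 0 = 0) (ha : ∀ r, 0 ≤ a (r + 1))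
    (hArec : ∀ r, A (r + 1) = A r + a (r + 1)) (r : ℕ) : 0 ≤ A r :=
  hA0 ▸ monotone_nat_of_le_succ (fun r => by rw [hArec r]; linarith [ha r]) (Nat.zero_le r)

theorem one_add_sqrt_sq_mul_le_add {lam μ A B d : ℝ} (hlam : 0 < lam) (hμ : 0 ≤ μ) (hA : 0 < A)
    (hd : 0 < d) (hB : μ * A ≤ B) (h : lam * d ^ 2 = (A + d) * B) :
    (1 + √(μ / (4 * lam))) ^ 2 * A ≤ A + d := by
  set s := √(μ / (4 * lam))
  have hs : 0 ≤ s := Real.sqrt_nonneg _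
  have hμs : μ = 4 * lam * s ^ 2 := by
    rw [Real.sq_sqrt (by positivity)]; field_simp
  have hd2 : 4 * s ^ 2 * (A * (A + d)) ≤ d ^ 2 := by
    refine le_of_mul_le_mul_left ?_ hlam
    calc lam * (4 * s ^ 2 * (A * (A + d))) = (A + d) * (μ * A) := by rw [hμs]; ring
      _ ≤ lam * d ^ 2 := h ▸ mul_le_mul_of_nonneg_left hB (by positivity)
  have h1 : 2 * s * A ≤ d := by
    refine (pow_le_pow_iff_left₀ (by positivity) hd.le two_ne_zero).mp ?_
    nlinarith [mul_nonneg (mul_nonneg (sq_nonneg s) hA.le) hd.le]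
  -- if `d < (2s + s²) A` then `d² < d (2s + s²) A`, which together with `d ≥ 2sA`
  -- contradicts `d² ≥ 4s²A(A + d)`
  by_contra! hc
  nlinarith [mul_lt_mul_of_pos_left hc hd, mul_nonneg hs hA.le, mul_nonneg (mul_nonneg hs hs) hA.le]

theorem one_add_sqrt_pow_div_le {lam μ : ℝ} {A B a : ℕ → ℝ} (hlam : 0 < lam) (hμ : 0 ≤ μ)
    (hA0 : A 0 = 0) (hB0 : B 0 = 1) (ha : ∀ r, 0 < a (r + 1))
    (haeq : ∀ r, lam * a (r + 1) ^ 2 = (A r + a (r + 1)) * B r)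
    (hArec : ∀ r, A (r + 1) = A r + a (r + 1)) (hBrec : ∀ r, B (r + 1) = B r + μ * a (r + 1))
    (k : ℕ) : (1 + √(μ / (4 * lam))) ^ (2 * k) / lam ≤ A (k + 1) := by
  have hB : ∀ r, B r = 1 + μ * A r := by
    intro r
    induction r with
    | zero => rw [hA0, hB0, mul_zero, add_zero]
    | succ r ih => rw [hBrec, hArec, ih]; ring
  have hA := nonneg_of_succ_eq_add hA0 (fun r => (ha r).le) hArec
  induction k with
  | zero =>
    have h := haeq 0
    rw [hA0, hB0, zero_add, mul_one] at h
    rw [hArec, hA0, zero_add, mul_zero, pow_zero, div_le_iff₀ hlam]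
    nlinarith [ha 0]
  | succ k ih =>
    have hstep := one_add_sqrt_sq_mul_le_add hlam hμ (hArec k ▸ add_pos_of_nonneg_of_pos (hA k) (ha k))
      (ha (k + 1)) (by rw [hB]; linarith) (haeq (k + 1))
    rw [← hArec] at hstep
    calc (1 + √(μ / (4 * lam))) ^ (2 * (k + 1)) / lam
        = (1 + √(μ / (4 * lam))) ^ 2 * ((1 + √(μ / (4 * lam))) ^ (2 * k) / lam) := by ring
      _ ≤ (1 + √(μ / (4 * lam))) ^ 2 * A (k + 1) := by gcongr
      _ ≤ A (k + 1 + 1) := hstep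

theorem acc_sdane_full_participation_large_mu_general
    {E : Type*} [NormedAddCommGroup E] [InnerProductSpace ℝ E] [CompleteSpace E]
    (n : ℕ) (hn : 0 < n)
    (f' : Fin n → E → ℝ) (hdiff : ∀ i, Differentiable ℝ (f' i))
    (f : E → ℝ) (hfdef : f = fun x => (1 / (n : ℝ)) * ∑ i, f' i x)
    (μ : ℝ) (hμ : 0 ≤ μ)
    (hconv : ∀ i, ∀ x y : E,
      f' i y ≥ f' i x + ⟪gradient (f' i) x, y - x⟫ + (μ / 2) * ‖x - y‖ ^ 2)
    (δ : ℝ) (hδ : 0 < δ)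
    (hSOD : ∀ x y : E,
      (1 / (n : ℝ)) * ∑ i, ‖gradient (fun z => f z - f' i z) x
          - gradient (fun z => f z - f' i z) y‖ ^ 2 ≤ δ ^ 2 * ‖x - y‖ ^ 2)
    (lam : ℝ) (hlam : lam = 2 * δ)
    (x v y : ℕ → E) (xi : Fin n → ℕ → E) (A B a : ℕ → ℝ)
    (hA0 : A 0 = 0) (hB0 : B 0 = 1) (hv0 : v 0 = x 0)
    (ha : ∀ r, 0 < a (r + 1))
    (haeq : ∀ r, lam * a (r + 1) ^ 2 = (A r + a (r + 1)) * B r)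
    (hArec : ∀ r, A (r + 1) = A r + a (r + 1))
    (hBrec : ∀ r, B (r + 1) = B r + μ * a (r + 1))
    (hy : ∀ r, y r = (A (r + 1))⁻¹ • (A r • x r + a (r + 1) • v r))
    (hxrec : ∀ r, x (r + 1) = (1 / (n : ℝ)) • ∑ i, xi i r)
    (hvrec : ∀ r, v (r + 1) = (B (r + 1))⁻¹ •
      (B r • v r + (a (r + 1) * μ) • x (r + 1)
        - a (r + 1) • ((1 / (n : ℝ)) • ∑ i, gradient (f' i) (xi i r))))
    (hacc : ∀ r, ∑ i, ‖gradient (f' i) (xi i r) + gradient f (y r)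
          - gradient (f' i) (y r) + lam • (xi i r - y r)‖ ^ 2
      ≤ δ ^ 2 * ∑ i, ‖xi i r - y r‖ ^ 2)
    (xstar : E)
    (D : ℝ) (hD : D = ‖x 0 - xstar‖) :
    ∀ R : ℕ, 1 ≤ R →
      f (x R) - f xstar ≤
        4 * δ * D ^ 2 / (1 + Real.sqrt (μ / (8 * δ))) ^ (2 * R - 2) := by
  subst hlam hD
  have hA := nonneg_of_succ_eq_add hA0 (fun r => (ha r).le) hArec
  set Φ : ℕ → ℝ := fun r => A r * (f (x r) - f xstar) + B r / 2 * ‖xstar - v r‖ ^ 2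
  have hΦ : Antitone Φ := antitone_nat_of_succ_le fun r =>
    acc_sdane_potential_succ_le hn hdiff hfdef hμ hconv hδ hSOD (hA r) (ha r) (haeq r) (hArec r)
      (hBrec r) (hy r) (hxrec r) (hvrec r) (hacc r) xstar
  intro R hR
  obtain ⟨k, rfl⟩ : ∃ k, R = k + 1 := ⟨R - 1, by omega⟩
  have hgrowth := one_add_sqrt_pow_div_le (by positivity) hμ hA0 hB0 ha haeq hArec hBrec k
  have hApos : 0 < A (k + 1) := lt_of_lt_of_le (by positivity) hgrowth
  have hB : 0 < B (k + 1) :=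
    pos_of_mul_pos_right (by rw [← haeq]; have := ha (k + 1); positivity) (by linarith [ha (k + 1)])
  have hpot : A (k + 1) * (f (x (k + 1)) - f xstar) ≤ ‖x 0 - xstar‖ ^ 2 / 2 := by
    have := hΦ (Nat.zero_le (k + 1))
    simp only [Φ, hA0, hB0, hv0, norm_sub_rev xstar] at this
    have : 0 ≤ B (k + 1) / 2 * ‖v (k + 1) - xstar‖ ^ 2 := by positivity
    linarith
  rw [show 2 * (k + 1) - 2 = 2 * k by omega, show 8 * δ = 4 * (2 * δ) by ring]
  calc f (x (k + 1)) - f xstar ≤ ‖x 0 - xstar‖ ^ 2 / 2 / A (k + 1) := by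
        rw [le_div_iff₀ hApos]; linarith
    _ ≤ ‖x 0 - xstar‖ ^ 2 / 2 / ((1 + √(μ / (4 * (2 * δ)))) ^ (2 * k) / (2 * δ)) :=
        div_le_div_of_nonneg_left (by positivity) (by positivity) hgrowth
    _ = δ * ‖x 0 - xstar‖ ^ 2 / (1 + √(μ / (4 * (2 * δ)))) ^ (2 * k) := by field_simp
    _ ≤ 4 * δ * ‖x 0 - xstar‖ ^ 2 / (1 + √(μ / (4 * (2 * δ)))) ^ (2 * k) := by
        gcongr; linarith

/-- Acc-S-DANE with full client participation, case `μ ≥ 8δ`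
(Theorem `thm:MainThm-Acc-DANE`, second part). -/
theorem acc_sdane_full_participation_large_mu
    {E : Type*} [NormedAddCommGroup E] [InnerProductSpace ℝ E] [CompleteSpace E]
    (n : ℕ) (hn : 0 < n)
    (f' : Fin n → E → ℝ) (hdiff : ∀ i, Differentiable ℝ (f' i))
    (f : E → ℝ) (hfdef : f = fun x => (1 / (n : ℝ)) * ∑ i, f' i x)
    (μ : ℝ) (hμ : 0 ≤ μ)
    (hconv : ∀ i, ∀ x y : E,
      f' i y ≥ f' i x + ⟪gradient (f' i) x, y - x⟫ + (μ / 2) * ‖x - y‖ ^ 2)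
    (δ : ℝ) (hδ : 0 < δ) (hμδ : 8 * δ ≤ μ)
    (hSOD : ∀ x y : E,
      (1 / (n : ℝ)) * ∑ i, ‖gradient (fun z => f z - f' i z) x
          - gradient (fun z => f z - f' i z) y‖ ^ 2 ≤ δ ^ 2 * ‖x - y‖ ^ 2)
    (lam : ℝ) (hlam : lam = 2 * δ)
    (x v y : ℕ → E) (xi : Fin n → ℕ → E) (A B a : ℕ → ℝ)
    (hA0 : A 0 = 0) (hB0 : B 0 = 1) (hv0 : v 0 = x 0)
    (ha : ∀ r, 0 < a (r + 1))
    (haeq : ∀ r, lam * a (r + 1) ^ 2 = (A r + a (r + 1)) * B r)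
    (hArec : ∀ r, A (r + 1) = A r + a (r + 1))
    (hBrec : ∀ r, B (r + 1) = B r + μ * a (r + 1))
    (hy : ∀ r, y r = (A (r + 1))⁻¹ • (A r • x r + a (r + 1) • v r))
    (hxrec : ∀ r, x (r + 1) = (1 / (n : ℝ)) • ∑ i, xi i r)
    (hvrec : ∀ r, v (r + 1) = (B (r + 1))⁻¹ •
      (B r • v r + (a (r + 1) * μ) • x (r + 1)
        - a (r + 1) • ((1 / (n : ℝ)) • ∑ i, gradient (f' i) (xi i r))))
    (hacc : ∀ r, ∑ i, ‖gradient (f' i) (xi i r) + gradient f (y r)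
          - gradient (f' i) (y r) + lam • (xi i r - y r)‖ ^ 2
      ≤ δ ^ 2 * ∑ i, ‖xi i r - y r‖ ^ 2)
    (xstar : E) (hstar : ∀ z, f xstar ≤ f z)
    (D : ℝ) (hD : D = ‖x 0 - xstar‖) :
    ∀ R : ℕ, 1 ≤ R →
      f (x R) - f xstar ≤
        4 * δ * D ^ 2 / (1 + Real.sqrt (μ / (8 * δ))) ^ (2 * R - 2) :=
  acc_sdane_full_participation_large_mu_general n hn f' hdiff f hfdef μ hμ hconv δ hδ hSOD lam hlam
    x v y xi A B a hA0 hB0 hv0 ha haeq hArec hBrec hy hxrec hvrec hacc xstar D hD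
end

section
/- Monotone gradient norms of gradient descent: let f : E → ℝ be convex, differentiable, and L-smooth with L > 0, and for x ∈ E let x⁺ := x − (1/L)∇f(x). Then ‖∇f(x⁺)‖² ≤ ‖∇f(x)‖² − ‖∇f(x⁺) − ∇f(x)‖²; in particular ‖∇f(x⁺)‖ ≤ ‖∇f(x)‖, so gradient norms along gradient descent with constant stepsize 1/L are non-increasing. -/
/-!
Convexity and the descent lemma `f y ≤ f x + ⟪∇f x, y - x⟫ + L/2 ‖y - x‖²`, applied at the point
`y - L⁻¹ (∇f y - ∇f x)`, give the lower bound `f x + ⟪∇f x, y - x⟫ + ‖∇f y - ∇f x‖² / (2L) ≤ f y`.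
Adding it to its copy with `x` and `y` swapped yields cocoercivity of the gradient,
`‖∇f y - ∇f x‖² ≤ L ⟪∇f y - ∇f x, y - x⟫`. For `y = x⁺` we have `L (y - x) = -∇f x`, so with
`d = ∇f x⁺ - ∇f x` this reads `‖d‖² ≤ -⟪∇f x, d⟫`, and expanding `‖∇f x + d‖²` gives the claim.
-/

open RealInnerProductSpace

section GradientInequalities

variable {E : Type*} [NormedAddCommGroup E] [InnerProductSpace ℝ E] [CompleteSpace E]
  {f : E → ℝ} {L : ℝ}

lemma HasGradientAt.hasDerivAt_comp_add_smul {g x v : E} {t : ℝ}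
    (hf : HasGradientAt f g (x + t • v)) :
    HasDerivAt (fun s : ℝ => f (x + s • v)) ⟪g, v⟫ t := by
  have hline : HasDerivAt (fun s : ℝ => x + s • v) v t := by
    simpa using ((hasDerivAt_id t).smul_const v).const_add x
  simpa [Function.comp_def] using hf.hasFDerivAt.comp_hasDerivAt t hline

theorem le_add_inner_gradient_add_sq (hdiff : Differentiable ℝ f)
    (hsmooth : ∀ x y : E, ‖gradient f x - gradient f y‖ ≤ L * ‖x - y‖) (x y : E) :
    f y ≤ f x + ⟪gradient f x, y - x⟫ + L / 2 * ‖y - x‖ ^ 2 := by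
  set v := y - x
  let φ : ℝ → ℝ := fun t => f (x + t • v) - t * ⟪gradient f x, v⟫ - L / 2 * t ^ 2 * ‖v‖ ^ 2
  have hφ : ∀ t : ℝ, HasDerivAt φ
      (⟪gradient f (x + t • v) - gradient f x, v⟫ - L * t * ‖v‖ ^ 2) t := by
    intro t
    have hquad := ((hasDerivAt_pow 2 t).const_mul (L / 2)).mul_const (‖v‖ ^ 2)
    refine ((((hdiff _).hasGradientAt.hasDerivAt_comp_add_smul).sub
      ((hasDerivAt_id t).mul_const ⟪gradient f x, v⟫)).sub hquad).congr_deriv ?_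
    simp only [inner_sub_left, one_mul, Nat.cast_ofNat, Nat.reduceSub, pow_one]
    ring
  have hφ_anti : AntitoneOn φ (Set.Icc 0 1) := by
    refine antitoneOn_of_hasDerivWithinAt_nonpos (convex_Icc 0 1)
      (fun t _ => (hφ t).continuousAt.continuousWithinAt)
      (fun t _ => (hφ t).hasDerivWithinAt) fun t ht => ?_
    rw [interior_Icc] at ht
    have hgrad : ‖gradient f (x + t • v) - gradient f x‖ ≤ L * (t * ‖v‖) := by
      simpa [norm_smul, abs_of_pos ht.1] using hsmooth (x + t • v) x
    calc ⟪gradient f (x + t • v) - gradient f x, v⟫ - L * t * ‖v‖ ^ 2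
        ≤ ‖gradient f (x + t • v) - gradient f x‖ * ‖v‖ - L * t * ‖v‖ ^ 2 := by
          gcongr; exact real_inner_le_norm _ _
      _ ≤ L * (t * ‖v‖) * ‖v‖ - L * t * ‖v‖ ^ 2 := by gcongr
      _ = 0 := by ring
  have h10 := hφ_anti (Set.left_mem_Icc.2 zero_le_one) (Set.right_mem_Icc.2 zero_le_one)
    zero_le_one
  simp only [φ, v, zero_smul, add_zero, one_smul, add_sub_cancel] at h10
  linarith

theorem add_inner_gradient_add_sq_le (hdiff : Differentiable ℝ f)
    (hconv : ∀ x y : E, f y ≥ f x + ⟪gradient f x, y - x⟫) (hL : 0 < L)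
    (hsmooth : ∀ x y : E, ‖gradient f x - gradient f y‖ ≤ L * ‖x - y‖) (x y : E) :
    f x + ⟪gradient f x, y - x⟫ + (2 * L)⁻¹ * ‖gradient f y - gradient f x‖ ^ 2 ≤ f y := by
  set d := gradient f y - gradient f x
  set z := y - L⁻¹ • d
  have hconv_z := hconv x z
  have hdescent_z := le_add_inner_gradient_add_sq hdiff hsmooth y z
  have hzx : z - x = (y - x) - L⁻¹ • d := by simp only [z]; abel
  have hzy : z - y = -(L⁻¹ • d) := by simp only [z]; abel
  have hd : ⟪gradient f y, d⟫ - ⟪gradient f x, d⟫ = ‖d‖ ^ 2 := by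
    rw [← inner_sub_left, real_inner_self_eq_norm_sq]
  rw [hzx, inner_sub_right, real_inner_smul_right] at hconv_z
  rw [hzy, inner_neg_right, real_inner_smul_right, norm_neg, norm_smul, mul_pow,
    Real.norm_eq_abs, sq_abs] at hdescent_z
  have hcoef : (2 * L)⁻¹ * ‖d‖ ^ 2 = L⁻¹ * ‖d‖ ^ 2 - L / 2 * (L⁻¹ ^ 2 * ‖d‖ ^ 2) := by
    field_simp; ring
  nlinarith [inv_pos.2 hL]

theorem inv_mul_norm_gradient_sub_sq_le_inner (hdiff : Differentiable ℝ f)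
    (hconv : ∀ x y : E, f y ≥ f x + ⟪gradient f x, y - x⟫) (hL : 0 < L)
    (hsmooth : ∀ x y : E, ‖gradient f x - gradient f y‖ ≤ L * ‖x - y‖) (x y : E) :
    L⁻¹ * ‖gradient f y - gradient f x‖ ^ 2 ≤ ⟪gradient f y - gradient f x, y - x⟫ := by
  have hxy := add_inner_gradient_add_sq_le hdiff hconv hL hsmooth x y
  have hyx := add_inner_gradient_add_sq_le hdiff hconv hL hsmooth y x
  rw [← neg_sub y x, inner_neg_right, norm_sub_rev] at hyx
  have hcoef : L⁻¹ = 2 * (2 * L)⁻¹ := by field_simp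
  rw [inner_sub_left, hcoef]
  linarith

end GradientInequalities

/-- Gradient norms are non-increasing along gradient descent with stepsize `1/L`
(Lemma `thm:GD-GradNorm`). -/
theorem gd_gradient_norm_monotone
    {E : Type*} [NormedAddCommGroup E] [InnerProductSpace ℝ E] [CompleteSpace E]
    (f : E → ℝ) (hdiff : Differentiable ℝ f)
    (hconv : ∀ x y : E, f y ≥ f x + ⟪gradient f x, y - x⟫)
    (L : ℝ) (hL : 0 < L)
    (hsmooth : ∀ x y : E, ‖gradient f x - gradient f y‖ ≤ L * ‖x - y‖)
    (x : E) (xplus : E) (hxplus : xplus = x - (1 / L) • gradient f x) :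
    ‖gradient f xplus‖ ^ 2
        ≤ ‖gradient f x‖ ^ 2 - ‖gradient f xplus - gradient f x‖ ^ 2 ∧
    ‖gradient f xplus‖ ≤ ‖gradient f x‖ := by
  set g := gradient f x
  set d := gradient f xplus - g
  have hcoco := inv_mul_norm_gradient_sub_sq_le_inner hdiff hconv hL hsmooth x xplus
  have hstep : xplus - x = -(L⁻¹ • g) := by rw [hxplus, one_div]; abel
  rw [hstep, inner_neg_right, real_inner_smul_right, real_inner_comm] at hcoco
  have hdg : ‖d‖ ^ 2 ≤ -⟪g, d⟫ := by nlinarith [inv_pos.2 hL]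
  have hsq : ‖gradient f xplus‖ ^ 2 ≤ ‖g‖ ^ 2 - ‖d‖ ^ 2 := by
    rw [show gradient f xplus = g + d by simp [d], norm_add_sq_real]
    linarith
  refine ⟨hsq, ?_⟩
  rw [← pow_le_pow_iff_left₀ (norm_nonneg _) (norm_nonneg _) two_ne_zero]
  nlinarith [sq_nonneg ‖d‖]
end
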